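/- Let (X, R, C, F) be a CRS with food set whose semigroup (S_F, ∘) is nilpotent. Then for every initial condition Y_0 ⊆ X_F, the discrete dynamics (Y_n) stabilizes at ∅: there exists N ∈ ℕ such that Y_n = ∅ for all n ≥ N. -/

import Mathlib

open Set

universe u

/-- Domain of a reaction: chemicals consumed. -/
def rDom {X : Type u} (r : X → ℤ) : Set X := {x | r x < 0}

/-- Range of a reaction: chemicals produced. -/
def rRan {X : Type u} (r : X → ℤ) : Set X := {x | 0 < r x}

/-- Function of a reaction: `φ_r(Y) = ran(r)` if `dom(r) ⊆ Y`, else `∅`. -/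
def phiRxn {X : Type u} (r : X → ℤ) : Set X → Set X :=
  fun Y => {x | rDom r ⊆ Y ∧ x ∈ rRan r}

/-- Sum of two maps on the power set: `(φ + ψ)(Y) = φ(Y) ∪ ψ(Y)`. -/
def mapAdd {X : Type u} (φ ψ : Set X → Set X) : Set X → Set X := fun Y => φ Y ∪ ψ Y

/-- The zero map `Y ↦ ∅`. -/
def mapZero {X : Type u} : Set X → Set X := fun _ => (∅ : Set X)

/-- Partial order: `φ ≤ ψ` iff `φ(Y) ⊆ ψ(Y)` for all `Y`. -/
def mapLE {X : Type u} (φ ψ : Set X → Set X) : Prop := ∀ Y : Set X, φ Y ⊆ ψ Y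

/-- Monotone map on the power set. -/
def MonotoneMap {X : Type u} (φ : Set X → Set X) : Prop :=
  ∀ ⦃Z Y : Set X⦄, Z ⊆ Y → φ Z ⊆ φ Y

/-- A chemical reaction system on the set of chemicals `X`: a finite set of reactions
`R` and a set `C ⊆ X × R` of catalyzed reactions. -/
structure CRS (X : Type u) where
  R : Set (X → ℤ)
  hR : R.Finite
  C : Set (X × (X → ℤ))
  hC : ∀ p ∈ C, p.2 ∈ R

/-- Function of a chemical: `φ_x = Σ_{(x,r) ∈ C} φ_r`. -/
def phiChem {X : Type u} (𝒞 : CRS X) (x : X) : Set X → Set X :=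
  fun Y => {y | ∃ r, (x, r) ∈ 𝒞.C ∧ y ∈ phiRxn r Y}

/-- The smallest set of maps containing the generators `G` and the zero map and
closed under composition and sum. -/
inductive InClosure {X : Type u} (G : Set (Set X → Set X)) : (Set X → Set X) → Prop
  | gen {φ} : φ ∈ G → InClosure G φ
  | zero : InClosure G mapZero
  | comp {φ ψ} : InClosure G φ → InClosure G ψ → InClosure G (φ ∘ ψ)
  | add {φ ψ} : InClosure G φ → InClosure G ψ → InClosure G (mapAdd φ ψ)

/-- The semigroup model `S(Y)` generated by the functions of the chemicals of `Y`.
The full semigroup model `S` is `SgModel 𝒞 Set.univ`. -/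
def SgModel {X : Type u} (𝒞 : CRS X) (Y : Set X) : Set (Set X → Set X) :=
  {φ | InClosure {ψ | ∃ x ∈ Y, ψ = phiChem 𝒞 x} φ}

/-- The function `Φ_Y` of a subset `Y`, the sum (pointwise union) of all elements
of `S(Y)`. -/
def PhiSub {X : Type u} (𝒞 : CRS X) (Y : Set X) : Set X → Set X :=
  fun W => {y | ∃ φ ∈ SgModel 𝒞 Y, y ∈ φ W}

/-- The closure `F̄` of a food set: the smallest set containing `F` such that
`ran(r) ⊆ F̄` for every reaction `r ∈ R` with `dom(r) ⊆ F` catalyzed by some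
chemical of `F`. -/
def foodClosure {X : Type u} (𝒞 : CRS X) (F : Set X) : Set X :=
  ⋂₀ {G | F ⊆ G ∧ ∀ r ∈ 𝒞.R, rDom r ⊆ F → (∃ x ∈ F, (x, r) ∈ 𝒞.C) → rRan r ⊆ G}

/-- `X_F = X \ F̄`. -/
def XF {X : Type u} (𝒞 : CRS X) (F : Set X) : Set X := (foodClosure 𝒞 F)ᶜ

/-- The `F`-modification of a map:
`φ_F(Z) = (φ(Z ∪ F̄) ∪ Φ_{F̄}(Z ∪ F̄)) ∩ X_F`. -/
def Fmod {X : Type u} (𝒞 : CRS X) (F : Set X) (φ : Set X → Set X) : Set X → Set X :=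
  fun Z =>
    (φ (Z ∪ foodClosure 𝒞 F) ∪ PhiSub 𝒞 (foodClosure 𝒞 F) (Z ∪ foodClosure 𝒞 F)) ∩ XF 𝒞 F

/-- `S_F(Y)`: the smallest set of maps containing `{(φ_x)_F : x ∈ Y}` and the zero map,
closed under composition and sum. -/
def SgModelF {X : Type u} (𝒞 : CRS X) (F : Set X) (Y : Set X) : Set (Set X → Set X) :=
  {φ | InClosure {ψ | ∃ x ∈ Y, ψ = Fmod 𝒞 F (phiChem 𝒞 x)} φ}

/-- The function `Φ_Y` of `Y ⊆ X_F` in the semigroup model with food set. -/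
def PhiSubF {X : Type u} (𝒞 : CRS X) (F : Set X) (Y : Set X) : Set X → Set X :=
  fun W => {y | ∃ φ ∈ SgModelF 𝒞 F Y, y ∈ φ W}

/-- The semigroup model with food set `S_F`, generated by the `F`-modifications of all
elements of `S`. -/
def SgF {X : Type u} (𝒞 : CRS X) (F : Set X) : Set (Set X → Set X) :=
  {φ | InClosure {ψ | ∃ φ' ∈ SgModel 𝒞 Set.univ, ψ = Fmod 𝒞 F φ'} φ}

/-- The discrete dynamics: `Y_{n+1} = Φ_{Y_n}(Y_n)`. -/
def dyn {X : Type u} (𝒞 : CRS X) (F : Set X) (Y0 : Set X) : ℕ → Set X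
  | 0 => Y0
  | n + 1 => PhiSubF 𝒞 F (dyn 𝒞 F Y0 n) (dyn 𝒞 F Y0 n)

/-- `(S_F, ∘)` is nilpotent: some `N` such that every composition of `N` elements of
`S_F` is the zero map. -/
def NilpotentF {X : Type u} (𝒞 : CRS X) (F : Set X) : Prop :=
  ∃ N : ℕ, ∀ l : List (Set X → Set X),
    l.length = N → (∀ φ ∈ l, φ ∈ SgF 𝒞 F) → l.foldr (· ∘ ·) id = mapZero

/-- `x` is generated from `W` (conditions (F1) and (F2)); if `withCat = true`, in
addition every reaction used is catalyzed by some chemical. -/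
def GenFrom {X : Type u} (𝒞 : CRS X) (W : Set X) (withCat : Bool) (x : X) : Prop :=
  ∃ (J : Finset ℕ) (ri : ℕ → X → ℤ) (μ : ℕ → ℕ) (n : ℕ) (P : ℕ → Finset ℕ),
    (∀ i ∈ J, ri i ∈ 𝒞.R) ∧
    (∀ i ∈ J, 0 < μ i) ∧
    x ∈ rRan (fun y => ∑ i ∈ J, (μ i : ℤ) * ri i y) ∧
    rDom (fun y => ∑ i ∈ J, (μ i : ℤ) * ri i y) ⊆ W ∧
    0 < n ∧
    (∀ j k, j < n → k < n → j ≠ k → Disjoint (P j) (P k)) ∧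
    J = (Finset.range n).biUnion P ∧
    rDom (fun y => ∑ i ∈ P 0, (μ i : ℤ) * ri i y) ⊆ W ∧
    (∀ j, j + 1 < n →
      rDom (fun y => ∑ i ∈ P (j + 1), (μ i : ℤ) * ri i y) ⊆
        {y | ∃ k ≤ j, y ∈ rRan (fun z => ∑ i ∈ P k, (μ i : ℤ) * ri i z)}) ∧
    (withCat = true → ∀ i ∈ J, ∃ c : X, (c, ri i) ∈ 𝒞.C)

/-- A CRS with food set `F` is RAF: `(X,R,C)` is generated from `F̄`, and every
`x ∈ X_F` is generated from `F̄` using only catalyzed reactions. -/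
def IsRAF {X : Type u} (𝒞 : CRS X) (F : Set X) : Prop :=
  (∀ x : X, GenFrom 𝒞 (foodClosure 𝒞 F) false x) ∧
  (∀ x ∈ XF 𝒞 F, GenFrom 𝒞 (foodClosure 𝒞 F) true x)

/-- Restriction of a reaction to a subset of chemicals. -/
def restRxn {X : Type u} (X' : Set X) (r : X → ℤ) : X' → ℤ := fun y => r y

/-- `R|_{X'}`. -/
def restR {X : Type u} (𝒞 : CRS X) (X' : Set X) : Set (X' → ℤ) :=
  {r' | ∃ r ∈ 𝒞.R, rDom r ⊆ X' ∧ (rRan r ∩ X').Nonempty ∧ r' = restRxn X' r}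

/-- `C|_{X'}`. -/
def restC {X : Type u} (𝒞 : CRS X) (X' : Set X) : Set (X' × (X' → ℤ)) :=
  {p | ∃ r, ((p.1 : X), r) ∈ 𝒞.C ∧ restRxn X' r ∈ restR 𝒞 X' ∧ p.2 = restRxn X' r}

/-- The subnetwork `(X', R|_{X'}, C|_{X'})`. -/
def restCRS {X : Type u} (𝒞 : CRS X) (X' : Set X) : CRS X' where
  R := restR 𝒞 X'
  hR := (𝒞.hR.image (restRxn X')).subset (by
    rintro r' ⟨r, hr, -, -, rfl⟩
    exact ⟨r, hr, rfl⟩)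
  C := restC 𝒞 X'
  hC := by
    rintro p ⟨r, -, hmem, hp⟩
    rw [hp]
    exact hmem

/-- `X' ⊆ X` is a RAF subset of `(X,R,C,F)`. -/
def IsRAFSubset {X : Type u} (𝒞 : CRS X) (F : Set X) (X' : Set X) : Prop :=
  IsRAF (restCRS 𝒞 X') {y : X' | (y : X) ∈ F} ∧
  foodClosure 𝒞 F ⊆ X' ∧
  (∀ r ∈ 𝒞.R, rDom r ⊆ X' → (rRan r ∩ X').Nonempty → rRan r ⊆ X')

/-!
Every map in `S_F` is monotone, and over a finite `X` each `Φ_{Y_k}` is a finite sum of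
elements of `S_F`, hence bounded by some `ψ_k ∈ S_F`. By monotonicity
`Y_n ⊆ (ψ_{n-1} ∘ ⋯ ∘ ψ_0)(Y_0)`, and nilpotency makes that composite the zero map
once `n ≥ N`.
-/

theorem List.foldr_comp_append {α : Type*} (l₁ l₂ : List (α → α)) :
    (l₁ ++ l₂).foldr (· ∘ ·) id = l₁.foldr (· ∘ ·) id ∘ l₂.foldr (· ∘ ·) id := by
  induction l₁ with
  | nil => rfl
  | cons f l₁ ih => simp only [List.cons_append, List.foldr_cons, ih]; rfl

namespace InClosure

variable {X : Type u} {G G' : Set (Set X → Set X)} {φ : Set X → Set X}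

theorem mono (hGG' : G ⊆ G') (h : InClosure G φ) : InClosure G' φ := by
  induction h with
  | gen h => exact .gen (hGG' h)
  | zero => exact .zero
  | comp _ _ ih₁ ih₂ => exact .comp ih₁ ih₂
  | add _ _ ih₁ ih₂ => exact .add ih₁ ih₂

theorem monotoneMap (hG : ∀ ψ ∈ G, MonotoneMap ψ) (h : InClosure G φ) : MonotoneMap φ := by
  induction h with
  | gen h => exact hG _ h
  | zero => exact fun _ _ _ => Subset.rfl
  | comp _ _ ih₁ ih₂ => exact fun _ _ hZY => ih₁ (ih₂ hZY)
  | add _ _ ih₁ ih₂ => exact fun _ _ hZY => union_subset_union (ih₁ hZY) (ih₂ hZY)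

theorem exists_upperBound {s : Set (Set X → Set X)} (hs : s.Finite)
    (h : ∀ ψ ∈ s, InClosure G ψ) : ∃ Ψ, InClosure G Ψ ∧ ∀ ψ ∈ s, mapLE ψ Ψ := by
  induction s, hs using Set.Finite.induction_on with
  | empty => exact ⟨mapZero, .zero, by simp⟩
  | @insert ψ s _ _ ih =>
    obtain ⟨Ψ, hΨ, hle⟩ := ih fun χ hχ => h χ (mem_insert_of_mem ψ hχ)
    refine ⟨mapAdd ψ Ψ, .add (h ψ (mem_insert ψ s)) hΨ, ?_⟩
    rintro χ (rfl | hχ) W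
    · exact subset_union_left
    · exact (hle χ hχ W).trans subset_union_right

end InClosure

section Monotonicity

variable {X : Type u} (𝒞 : CRS X)

theorem phiChem_monotoneMap (x : X) : MonotoneMap (phiChem 𝒞 x) := by
  rintro Z Y hZY y ⟨r, hr, hdom, hran⟩
  exact ⟨r, hr, hdom.trans hZY, hran⟩

theorem monotoneMap_of_mem_sgModel {Y : Set X} {φ : Set X → Set X} (hφ : φ ∈ SgModel 𝒞 Y) :
    MonotoneMap φ :=
  InClosure.monotoneMap (by rintro ψ ⟨x, -, rfl⟩; exact phiChem_monotoneMap 𝒞 x) hφ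

theorem phiSub_monotoneMap (Y : Set X) : MonotoneMap (PhiSub 𝒞 Y) := by
  rintro Z W hZW y ⟨φ, hφ, hy⟩
  exact ⟨φ, hφ, monotoneMap_of_mem_sgModel 𝒞 hφ hZW hy⟩

theorem fmod_monotoneMap (F : Set X) {φ : Set X → Set X} (hφ : MonotoneMap φ) :
    MonotoneMap (Fmod 𝒞 F φ) := fun _ _ hZY =>
  have hZY' := union_subset_union_left (foodClosure 𝒞 F) hZY
  inter_subset_inter_left _ (union_subset_union (hφ hZY') (phiSub_monotoneMap 𝒞 _ hZY'))

theorem monotoneMap_of_mem_sgF (F : Set X) {φ : Set X → Set X} (hφ : φ ∈ SgF 𝒞 F) :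
    MonotoneMap φ :=
  InClosure.monotoneMap
    (by rintro ψ ⟨φ', hφ', rfl⟩; exact fmod_monotoneMap 𝒞 F (monotoneMap_of_mem_sgModel 𝒞 hφ'))
    hφ

end Monotonicity

section Dynamics

variable {X : Type u} (𝒞 : CRS X) (F : Set X)

theorem sgModelF_subset_sgF (Y : Set X) : SgModelF 𝒞 F Y ⊆ SgF 𝒞 F := fun _ =>
  InClosure.mono <| by
    rintro ψ ⟨x, -, rfl⟩
    exact ⟨phiChem 𝒞 x, .gen ⟨x, mem_univ x, rfl⟩, rfl⟩

theorem exists_mem_sgF_phiSubF_le [Finite X] (Y : Set X) :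
    ∃ Ψ ∈ SgF 𝒞 F, mapLE (PhiSubF 𝒞 F Y) Ψ := by
  obtain ⟨Ψ, hΨ, hle⟩ :=
    InClosure.exists_upperBound (toFinite (SgModelF 𝒞 F Y)) (sgModelF_subset_sgF 𝒞 F Y)
  exact ⟨Ψ, hΨ, fun W y ⟨φ, hφ, hy⟩ => hle φ hφ W hy⟩

theorem dyn_subset_foldr_comp [Finite X] (Y0 : Set X) (n : ℕ) :
    ∃ l : List (Set X → Set X), l.length = n ∧ (∀ φ ∈ l, φ ∈ SgF 𝒞 F) ∧
      dyn 𝒞 F Y0 n ⊆ l.foldr (· ∘ ·) id Y0 := by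
  induction n with
  | zero => exact ⟨[], rfl, by simp, Subset.rfl⟩
  | succ n ih =>
    obtain ⟨l, hlen, hl, hsub⟩ := ih
    obtain ⟨Ψ, hΨ, hle⟩ := exists_mem_sgF_phiSubF_le 𝒞 F (dyn 𝒞 F Y0 n)
    refine ⟨Ψ :: l, by simp [hlen], by simpa using ⟨hΨ, hl⟩, ?_⟩
    exact (hle _).trans (monotoneMap_of_mem_sgF 𝒞 F hΨ hsub)

theorem NilpotentF.exists_foldr_comp_eq_zero (h : NilpotentF 𝒞 F) :
    ∃ N, ∀ l : List (Set X → Set X), N ≤ l.length → (∀ φ ∈ l, φ ∈ SgF 𝒞 F) →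
      l.foldr (· ∘ ·) id = mapZero := by
  obtain ⟨N, hN⟩ := h
  refine ⟨N, fun l hlen hl => ?_⟩
  have htake : (l.take N).foldr (· ∘ ·) id = mapZero :=
    hN _ (by simpa using hlen) fun φ hφ => hl φ (List.mem_of_mem_take hφ)
  rw [← List.take_append_drop N l, List.foldr_comp_append, htake]
  rfl

end Dynamics

theorem nilpotent_dynamics_to_empty_general {X : Type u} [Finite X] (𝒞 : CRS X) (F : Set X)
    (h : NilpotentF 𝒞 F) (Y0 : Set X) :
    ∃ N : ℕ, ∀ n ≥ N, dyn 𝒞 F Y0 n = ∅ := by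
  obtain ⟨N, hN⟩ := h.exists_foldr_comp_eq_zero
  refine ⟨N, fun n hn => ?_⟩
  obtain ⟨l, hlen, hl, hsub⟩ := dyn_subset_foldr_comp 𝒞 F Y0 n
  rw [hN l (hlen ▸ hn) hl] at hsub
  exact subset_empty_iff.mp hsub

/-- if `(S_F, ∘)` is nilpotent, the discrete dynamics stabilizes at `∅`
for every initial condition `Y₀ ⊆ X_F`. -/
theorem nilpotent_dynamics_to_empty {X : Type u} [Finite X] (𝒞 : CRS X) (F : Set X)
    (h : NilpotentF 𝒞 F) (Y0 : Set X) (hY0 : Y0 ⊆ XF 𝒞 F) :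
    ∃ N : ℕ, ∀ n ≥ N, dyn 𝒞 F Y0 n = ∅ :=
  nilpotent_dynamics_to_empty_general 𝒞 F h Y0
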